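/- arXiv:1911.12630 — 4 statements merged into one kernel-verified Lean document; each statement's English description precedes it below -/
import Mathlib

section
/- Let Σ be a Riemannian surface with Gauss curvature K, let H, c be real constants with c ≠ 0, and let ν, h be smooth functions on Σ satisfying ‖∇ν + H∇h‖² = (H² − K + cν²)(1 − ν²), Δν = (2K − c(1+ν²) − 4H²)ν, and ‖∇h‖² = 1 − ν². If ν is a constant function with 0 < ν² < 1, then c < 0, 4H² < −c, K = 4H² + c, and ν² = (4H² + c)/c. -/
/-- Abstract calculus data on a (connected) Riemannian surface `S`:
a gradient operator with values in an inner product space `V`, and a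
Laplace–Beltrami operator, satisfying the basic properties that constants
have vanishing gradient and Laplacian, and that a function whose gradient
vanishes identically is constant (connectedness). -/
structure SurfaceCalculus (S : Type*) (V : Type*) [NormedAddCommGroup V]
    [InnerProductSpace ℝ V] where
  grad : (S → ℝ) → S → V
  laplacian : (S → ℝ) → S → ℝ
  grad_const : ∀ (a : ℝ) (x : S), grad (fun _ => a) x = 0
  laplacian_const : ∀ (a : ℝ) (x : S), laplacian (fun _ => a) x = 0
  const_of_grad_eq_zero : ∀ f : S → ℝ, (∀ x, grad f x = 0) → ∃ a, ∀ x, f x = a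

/-!
For constant `ν ≡ a` both `∇ν` and `Δν` vanish. The gradient equation together with
`‖∇h‖² = 1 - a² ≠ 0` then forces `K = c a²`, and the Laplacian equation with `a ≠ 0` gives
`2K = c (1 + a²) + 4H²`. Eliminating `K` yields `c (a² - 1) = 4H²`, from which the sign of `c`
and the remaining identities follow since `0 < a² < 1`.
-/

namespace SurfaceCalculus

variable {S V : Type*} [NormedAddCommGroup V] [InnerProductSpace ℝ V] (D : SurfaceCalculus S V)

theorem grad_eq_zero_of_forall_eq {f : S → ℝ} {a : ℝ} (hf : ∀ x, f x = a) (x : S) :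
    D.grad f x = 0 := by
  rw [funext hf]
  exact D.grad_const a x

theorem laplacian_eq_zero_of_forall_eq {f : S → ℝ} {a : ℝ} (hf : ∀ x, f x = a) (x : S) :
    D.laplacian f x = 0 := by
  rw [funext hf]
  exact D.laplacian_const a x

end SurfaceCalculus

theorem eq_mul_sq_of_norm_smul_sq_eq {V : Type*} [NormedAddCommGroup V] [NormedSpace ℝ V]
    {w : V} {H K c a : ℝ} (ha : a ^ 2 ≠ 1)
    (hHw : ‖H • w‖ ^ 2 = (H ^ 2 - K + c * a ^ 2) * (1 - a ^ 2)) (hw : ‖w‖ ^ 2 = 1 - a ^ 2) :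
    K = c * a ^ 2 := by
  rw [norm_smul, mul_pow, Real.norm_eq_abs, sq_abs, hw] at hHw
  have := mul_right_cancel₀ (sub_ne_zero.mpr ha.symm) hHw
  linarith

theorem neg_and_sq_eq_div_of_mul_sq_eq {H c a : ℝ} (hc : c ≠ 0) (ha0 : 0 < a ^ 2) (ha1 : a ^ 2 < 1)
    (h : c * a ^ 2 = c + 4 * H ^ 2) :
    c < 0 ∧ 4 * H ^ 2 < -c ∧ a ^ 2 = (4 * H ^ 2 + c) / c := by
  have hneg : c < 0 := by
    refine hc.lt_or_gt.resolve_right fun hpos => ?_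
    nlinarith [sq_nonneg H]
  refine ⟨hneg, by nlinarith, ?_⟩
  rw [eq_div_iff hc]
  linarith

theorem stmt1_general {S V : Type*} [NormedAddCommGroup V] [InnerProductSpace ℝ V] [Nonempty S]
    (D : SurfaceCalculus S V) (H c : ℝ) (hc : c ≠ 0) (K ν h : S → ℝ)
    (M1 : ∀ x, ‖D.grad ν x + H • D.grad h x‖^2 = (H^2 - K x + c*(ν x)^2) * (1 - (ν x)^2))
    (M2 : ∀ x, D.laplacian ν x = (2*K x - c*(1 + (ν x)^2) - 4*H^2) * ν x)
    (M3 : ∀ x, ‖D.grad h x‖^2 = 1 - (ν x)^2)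
    (a : ℝ) (hν : ∀ x, ν x = a) (ha0 : 0 < a^2) (ha1 : a^2 < 1) :
    c < 0 ∧ 4*H^2 < -c ∧ (∀ x, K x = 4*H^2 + c) ∧ a^2 = (4*H^2 + c)/c := by
  have hK : ∀ x, K x = c * a ^ 2 := fun x => by
    have h1 := M1 x
    have h3 := M3 x
    rw [D.grad_eq_zero_of_forall_eq hν, zero_add, hν] at h1
    rw [hν] at h3
    exact eq_mul_sq_of_norm_smul_sq_eq ha1.ne h1 h3
  have hca : c * a ^ 2 = c + 4 * H ^ 2 := by
    obtain ⟨x⟩ := ‹Nonempty S›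
    have h2 := M2 x
    rw [D.laplacian_eq_zero_of_forall_eq hν, hν, hK] at h2
    have ha : a ≠ 0 := by rintro rfl; simp at ha0
    have := (mul_eq_zero.mp h2.symm).resolve_right ha
    linarith
  obtain ⟨hneg, hH, hsq⟩ := neg_and_sq_eq_div_of_mul_sq_eq hc ha0 ha1 hca
  exact ⟨hneg, hH, fun x => by rw [hK x, hca]; ring, hsq⟩

theorem stmt1 {S V : Type*} [NormedAddCommGroup V] [InnerProductSpace ℝ V] [Nonempty S]
    (D : SurfaceCalculus S V) (H c : ℝ) (hc : c ≠ 0) (K ν h : S → ℝ)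
    (M1 : ∀ x, ‖D.grad ν x + H • D.grad h x‖^2 = (H^2 - K x + c*(ν x)^2) * (1 - (ν x)^2))
    (M2 : ∀ x, D.laplacian ν x = (2*K x - c*(1 + (ν x)^2) - 4*H^2) * ν x)
    (M3 : ∀ x, ‖D.grad h x‖^2 = 1 - (ν x)^2)
    (M4 : ∀ x, D.laplacian h x = 2*H*(ν x))
    (a : ℝ) (hν : ∀ x, ν x = a) (ha0 : 0 < a^2) (ha1 : a^2 < 1) :
    c < 0 ∧ 4*H^2 < -c ∧ (∀ x, K x = 4*H^2 + c) ∧ a^2 = (4*H^2 + c)/c :=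
  stmt1_general D H c hc K ν h M1 M2 M3 a hν ha0 ha1
end

section
/- Let H ∈ ℝ with 0 < 4H² < 1 and set K = 4H² − 1. Define on ℝ² the metric ds² = dσ² + cosh²(√(−K)σ)dτ², the functions ν(σ) = √(−K) tanh(√(−K)σ) and h(σ,τ) = 2Hσ + √(−K)τ. Then the pair (ν, h) satisfies (with c = −1): ‖∇ν + H∇h‖² = (H² − K − ν²)(1 − ν²), Δν = (2K + (1 + ν²) − 4H²)ν, ‖∇h‖² = 1 − ν², and Δh = 2Hν, where gradients, norms and Laplacians are taken with respect to ds². -/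
lemma my_hasDerivAt_tanh (x : ℝ) : HasDerivAt Real.tanh (1 / Real.cosh x ^ 2) x := by
  have h := (Real.hasDerivAt_sinh x).div (Real.hasDerivAt_cosh x) (Real.cosh_pos x).ne'
  have : (fun y => Real.sinh y / Real.cosh y) = Real.tanh := by
    funext y; rw [Real.tanh_eq_sinh_div_cosh]
  rw [show (Real.sinh / Real.cosh) = (fun y => Real.sinh y / Real.cosh y) from rfl, this] at h
  refine h.congr_deriv ?_
  have := Real.cosh_sq_sub_sinh_sq x
  rw [← this]; ring

section aux
variable (a : ℝ)

lemma aux_scale (σ : ℝ) : HasDerivAt (fun s : ℝ => a * s) a σ := by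
  simpa using (hasDerivAt_id σ).const_mul a

lemma aux_cosh (σ : ℝ) :
    HasDerivAt (fun s : ℝ => Real.cosh (a * s)) (a * Real.sinh (a * σ)) σ := by
  exact ((Real.hasDerivAt_cosh (a * σ)).comp σ (aux_scale a σ)).congr_deriv (mul_comm _ _)

lemma aux_nu (σ : ℝ) :
    HasDerivAt (fun s : ℝ => a * Real.tanh (a * s))
      (a ^ 2 / Real.cosh (a * σ) ^ 2) σ := by
  have h := ((my_hasDerivAt_tanh (a * σ)).comp σ (aux_scale a σ)).const_mul a
  refine h.congr_deriv ?_
  ring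

lemma aux_nu' (σ : ℝ) :
    HasDerivAt (fun s : ℝ => a ^ 2 / Real.cosh (a * s) ^ 2)
      (-2 * a ^ 3 * Real.sinh (a * σ) / Real.cosh (a * σ) ^ 3) σ := by
  have hden : HasDerivAt (fun s : ℝ => Real.cosh (a * s) ^ 2)
      (2 * Real.cosh (a * σ) * (a * Real.sinh (a * σ))) σ := by
    exact ((aux_cosh a σ).pow 2).congr_deriv (by norm_num)
  have h := (hasDerivAt_const σ (a ^ 2)).div hden (by positivity)
  refine h.congr_deriv ?_
  have hc := (Real.cosh_pos (a * σ)).ne'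
  rw [div_eq_div_iff (pow_ne_zero _ (pow_ne_zero _ hc)) (pow_ne_zero _ hc)]; ring

end aux

/-- Angle function `ν(σ) = √(1-4H²) · tanh(√(1-4H²)·σ)` (here `√(-K) = √(1-4H²)`). -/
noncomputable def nu5 (H σ : ℝ) : ℝ :=
  Real.sqrt (1 - 4*H^2) * Real.tanh (Real.sqrt (1 - 4*H^2) * σ)

/-- Height function `h(σ,τ) = 2Hσ + √(1-4H²)·τ`. -/
noncomputable def h5 (H σ τ : ℝ) : ℝ := 2*H*σ + Real.sqrt (1 - 4*H^2) * τ

/-- Metric coefficient `G(σ) = cosh(√(1-4H²)·σ)`, i.e. `ds² = dσ² + G(σ)²dτ²`. -/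
noncomputable def G5 (H σ : ℝ) : ℝ := Real.cosh (Real.sqrt (1 - 4*H^2) * σ)

/-- For the metric `ds² = dσ² + G(σ)²dτ²` the gradient, norm and Laplacian are
`∇f = f_σ ∂_σ + (f_τ/G²)∂_τ`, `‖∇f‖² = f_σ² + f_τ²/G²`,
`Δf = f_σσ + (G'/G)f_σ + f_ττ/G²`.  With `c = -1` and `K = 4H² - 1`, the pair
`(ν, h)` satisfies the four compatibility equations (M1)–(M4). -/
theorem stmt5 (H K : ℝ) (hH1 : 0 < 4*H^2) (hH2 : 4*H^2 < 1) (hK : K = 4*H^2 - 1) :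
    -- (M1):  ‖∇ν + H∇h‖² = (H² - K - ν²)(1 - ν²)
    (∀ σ τ : ℝ,
      (deriv (nu5 H) σ + H * deriv (fun s => h5 H s τ) σ)^2 +
        (deriv (fun t => nu5 H σ) τ + H * deriv (h5 H σ) τ)^2 / (G5 H σ)^2
      = (H^2 - K - (nu5 H σ)^2) * (1 - (nu5 H σ)^2)) ∧
    -- (M2):  Δν = (2K + (1 + ν²) - 4H²)ν
    (∀ σ τ : ℝ,
      deriv (deriv (nu5 H)) σ + (deriv (G5 H) σ / G5 H σ) * deriv (nu5 H) σ +
        deriv (deriv (fun t => nu5 H σ)) τ / (G5 H σ)^2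
      = (2*K + (1 + (nu5 H σ)^2) - 4*H^2) * nu5 H σ) ∧
    -- (M3):  ‖∇h‖² = 1 - ν²
    (∀ σ τ : ℝ,
      (deriv (fun s => h5 H s τ) σ)^2 + (deriv (h5 H σ) τ)^2 / (G5 H σ)^2
      = 1 - (nu5 H σ)^2) ∧
    -- (M4):  Δh = 2Hν
    (∀ σ τ : ℝ,
      deriv (deriv (fun s => h5 H s τ)) σ +
        (deriv (G5 H) σ / G5 H σ) * deriv (fun s => h5 H s τ) σ +
        deriv (deriv (h5 H σ)) τ / (G5 H σ)^2
      = 2*H*(nu5 H σ)) := by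
  set a : ℝ := Real.sqrt (1 - 4*H^2) with ha_def
  have ha2 : a ^ 2 = 1 - 4*H^2 := Real.sq_sqrt (by linarith)
  -- first derivatives
  have hnu : deriv (nu5 H) = fun σ => a ^ 2 / Real.cosh (a * σ) ^ 2 := by
    funext σ
    exact (aux_nu a σ).deriv
  have hnu' : ∀ σ, deriv (deriv (nu5 H)) σ
      = -2 * a ^ 3 * Real.sinh (a * σ) / Real.cosh (a * σ) ^ 3 := by
    intro σ; rw [hnu]; exact (aux_nu' a σ).deriv
  have hG : ∀ σ, deriv (G5 H) σ = a * Real.sinh (a * σ) := by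
    intro σ
    have : G5 H = fun s : ℝ => Real.cosh (a * s) := by funext s; rfl
    rw [this]; exact (aux_cosh a σ).deriv
  have hhs : ∀ σ τ : ℝ, deriv (fun s => h5 H s τ) σ = 2*H := by
    intro σ τ
    have : (fun s => h5 H s τ) = fun s => 2*H*s + a*τ := by funext s; rfl
    rw [this]
    exact (((hasDerivAt_id σ).const_mul (2*H)).add_const (a*τ)).deriv.trans (by ring)
  have hht : ∀ σ τ : ℝ, deriv (h5 H σ) τ = a := by
    intro σ τ
    have : h5 H σ = fun t => 2*H*σ + a*t := by funext t; rfl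
    rw [this]
    exact (((hasDerivAt_id τ).const_mul a).const_add (2*H*σ)).deriv.trans (by ring)
  -- second derivatives of h and of constant-in-τ ν
  have hhs2 : ∀ σ τ : ℝ, deriv (deriv (fun s => h5 H s τ)) σ = 0 := by
    intro σ τ
    have : deriv (fun s => h5 H s τ) = fun _ => 2*H := by funext s; exact hhs s τ
    rw [this, deriv_const]
  have hht2 : ∀ σ τ : ℝ, deriv (deriv (h5 H σ)) τ = 0 := by
    intro σ τ
    have : deriv (h5 H σ) = fun _ => a := by funext t; exact hht σ t
    rw [this, deriv_const]
  have hnt : ∀ σ τ : ℝ, deriv (fun _ : ℝ => nu5 H σ) τ = 0 := fun σ τ => deriv_const τ _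
  have hnt2 : ∀ σ τ : ℝ, deriv (deriv (fun _ : ℝ => nu5 H σ)) τ = 0 := by
    intro σ τ
    have : deriv (fun _ : ℝ => nu5 H σ) = fun _ => (0:ℝ) := by funext t; exact hnt σ t
    rw [this, deriv_const]
  -- basic facts about the hyperbolic functions at a*σ
  have key : ∀ σ : ℝ,
      Real.cosh (a*σ) > 0 ∧ Real.cosh (a*σ)^2 - Real.sinh (a*σ)^2 = 1 ∧
      Real.tanh (a*σ) * Real.cosh (a*σ) = Real.sinh (a*σ) := by
    intro σ
    refine ⟨Real.cosh_pos _, Real.cosh_sq_sub_sinh_sq _, ?_⟩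
    rw [Real.tanh_eq_sinh_div_cosh]
    field_simp
  refine ⟨?_, ?_, ?_, ?_⟩
  · intro σ τ
    obtain ⟨hb, hbs, hts⟩ := key σ
    rw [hnu, hhs, hnt, hht]
    show (a ^ 2 / Real.cosh (a*σ) ^ 2 + H * (2*H))^2 + (0 + H * a)^2 / (G5 H σ)^2 = _
    simp only [nu5, G5, ← ha_def, hK, Real.tanh_eq_sinh_div_cosh]
    have hb' := hb.ne'
    field_simp
    linear_combination (a^4*(Real.sinh (a*σ)^2+Real.cosh (a*σ)^2-1) - a^2*Real.cosh (a*σ)^2*(2-3*H^2)) * hbs + (Real.cosh (a*σ)^2*(5*H^2+(2-3*H^2)*(Real.cosh (a*σ)^2-1)) + (a^2+1-4*H^2)*(1-(Real.cosh (a*σ)^2-1)^2)) * ha2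
  · intro σ τ
    obtain ⟨hb, hbs, hts⟩ := key σ
    rw [hnu' σ, hG σ, hnt2 σ τ]
    simp only [hnu, nu5, G5, ← ha_def, hK, Real.tanh_eq_sinh_div_cosh]
    have hb' := hb.ne'
    field_simp
    linear_combination (a^3*Real.sinh (a*σ)) * hbs - (a*Real.sinh (a*σ)*Real.cosh (a*σ)^2) * ha2
  · intro σ τ
    obtain ⟨hb, hbs, hts⟩ := key σ
    rw [hhs, hht]
    simp only [nu5, G5, ← ha_def, Real.tanh_eq_sinh_div_cosh]
    have hb' := hb.ne'
    field_simp
    linear_combination (-(a^2)) * hbs + Real.cosh (a*σ)^2 * ha2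
  · intro σ τ
    obtain ⟨hb, hbs, hts⟩ := key σ
    rw [hhs2 σ τ, hht2 σ τ, hG σ, hhs]
    simp only [nu5, G5, ← ha_def, Real.tanh_eq_sinh_div_cosh]
    have hb' := hb.ne'
    field_simp
    ring
end

section
/- Let Ω = {z ∈ ℂ : Im z > 0} and K < 0. Define ν : Ω → ℝ by ν(z) = (√(−K)/2)(z + z̄)/|z|. For a Möbius transformation f(z) = (αz + β)/(γz + δ) with real coefficients and determinant 1, (ν∘f)(z) = (√(−K)/2)(2αγ|z|² + (αδ + βγ)(z + z̄) + 2βδ)/(|αz + β||γz + δ|). If ν∘f = ν or ν∘f = −ν on Ω, then αγ = 0 and βδ = 0. -/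
/-! Writing `f z = p / q` with `p = αz + β`, `q = γz + δ`, we get `f z + conj (f z) = (p q̄ + p̄ q) / |q|²`,
and `p q̄ + p̄ q` expands to the displayed numerator. Since `√(-K) ≠ 0`, `ν` vanishes exactly on the
imaginary axis, which `f` must then preserve: at `z = t i` the real part of `p q̄` is `αγ t² + βδ`, so this
vanishes for all `t > 0`, forcing `αγ = βδ = 0`. -/

open ComplexConjugate

namespace Complex

theorem div_add_conj_div_div_norm (p q : ℂ) :
    (p / q + conj (p / q)) / (‖p / q‖ : ℂ) = (p * conj q + conj p * q) / (‖p‖ * ‖q‖ : ℂ) := by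
  rcases eq_or_ne q 0 with rfl | hq
  · simp
  rcases eq_or_ne p 0 with rfl | hp
  · simp
  have hq' : (‖q‖ : ℂ) ≠ 0 := by simpa using hq
  have hp' : (‖p‖ : ℂ) ≠ 0 := by simpa using hp
  have hcq : conj q ≠ 0 := by simpa using hq
  have hnq : (‖q‖ : ℂ) ^ 2 = q * conj q := by rw [mul_conj, normSq_eq_norm_sq]; push_cast; ring
  rw [map_div₀, norm_div, div_add_div _ _ hq hcq]
  push_cast
  field_simp
  linear_combination (p * conj q + conj p * q) * hnq

theorem affine_mul_conj_add_conj_mul (α β γ δ : ℝ) (z : ℂ) :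
    (α * z + β) * conj (γ * z + δ) + conj (α * z + β) * (γ * z + δ)
      = 2 * α * γ * (‖z‖ : ℂ) ^ 2 + (α * δ + β * γ) * (z + conj z) + 2 * β * δ := by
  have hnz : (‖z‖ : ℂ) ^ 2 = z * conj z := by rw [mul_conj, normSq_eq_norm_sq]; push_cast; ring
  simp only [map_add, map_mul, conj_ofReal]
  linear_combination (-2 * α * γ : ℂ) * hnz

theorem div_re_eq_zero_iff (p q : ℂ) : (p / q).re = 0 ↔ (p * conj q).re = 0 := by
  rcases eq_or_ne q 0 with rfl | hq
  · simp
  rw [div_re, ← add_div, div_eq_zero_iff, mul_re, conj_re, conj_im, mul_neg, sub_neg_eq_add]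
  simp [hq]

theorem affine_mul_conj_re_of_I_mul (α β γ δ t : ℝ) :
    ((α * (t * I) + β) * conj (γ * (t * I) + δ)).re = α * γ * t ^ 2 + β * δ := by
  simp only [mul_re, add_re, add_im, mul_im, conj_re, conj_im, ofReal_re, ofReal_im, I_re, I_im]
  ring

end Complex

open Complex

noncomputable def angleFunction (c : ℝ) (z : ℂ) : ℂ := (c : ℂ) / 2 * (z + conj z) / (‖z‖ : ℂ)

theorem angleFunction_mobius (c α β γ δ : ℝ) (z : ℂ) :
    angleFunction c ((α * z + β) / (γ * z + δ)) = (c : ℂ) / 2 *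
      (2 * α * γ * (‖z‖ : ℂ) ^ 2 + (α * δ + β * γ) * (z + conj z) + 2 * β * δ) /
      (‖(α : ℂ) * z + β‖ * ‖(γ : ℂ) * z + δ‖ : ℂ) := by
  rw [angleFunction, mul_div_assoc, div_add_conj_div_div_norm, affine_mul_conj_add_conj_mul,
    mul_div_assoc]

theorem angleFunction_eq_zero_iff {c : ℝ} (hc : c ≠ 0) (w : ℂ) :
    angleFunction c w = 0 ↔ w.re = 0 := by
  rcases eq_or_ne w 0 with rfl | hw
  · simp [angleFunction]
  simp [angleFunction, add_conj, hc, hw]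

theorem stmt11_general (K : ℝ) (hK : K < 0) (α β γ δ : ℝ) :
    let ν : ℂ → ℂ := fun z =>
      ((Real.sqrt (-K) : ℝ) : ℂ)/2 * (z + (starRingEnd ℂ) z) / ((‖z‖ : ℝ) : ℂ)
    let f : ℂ → ℂ := fun z => ((α : ℂ)*z + (β : ℂ)) / ((γ : ℂ)*z + (δ : ℂ))
    -- the displayed formula for ν∘f
    (∀ z : ℂ, 0 < z.im →
      ν (f z) = ((Real.sqrt (-K) : ℝ) : ℂ)/2 *
        (2*(α : ℂ)*(γ : ℂ)*((‖z‖ : ℝ) : ℂ)^2 +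
          ((α : ℂ)*(δ : ℂ) + (β : ℂ)*(γ : ℂ))*(z + (starRingEnd ℂ) z) +
          2*(β : ℂ)*(δ : ℂ)) /
        (((‖(α : ℂ)*z + (β : ℂ)‖ : ℝ) : ℂ) *
          ((‖(γ : ℂ)*z + (δ : ℂ)‖ : ℝ) : ℂ))) ∧
    -- if ν∘f = ν or ν∘f = -ν on Ω, then αγ = 0 and βδ = 0
    (((∀ z : ℂ, 0 < z.im → ν (f z) = ν z) ∨
      (∀ z : ℂ, 0 < z.im → ν (f z) = -ν z)) → α*γ = 0 ∧ β*δ = 0) := by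
  intro ν f
  have hc : √(-K) ≠ 0 := (Real.sqrt_pos.2 (neg_pos.2 hK)).ne'
  refine ⟨fun z _ => angleFunction_mobius _ α β γ δ z, fun h => ?_⟩
  have hroot : ∀ t : ℝ, 0 < t → α * γ * t ^ 2 + β * δ = 0 := by
    intro t ht
    have him : 0 < (t * I).im := by simpa using ht
    have hν : ν (t * I) = 0 := (angleFunction_eq_zero_iff hc _).2 (by simp)
    have hνf : ν (f (t * I)) = 0 := by rcases h with h | h <;> simp [h _ him, hν]
    rw [← affine_mul_conj_re_of_I_mul, ← div_re_eq_zero_iff, ← angleFunction_eq_zero_iff hc]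
    exact hνf
  have h1 := hroot 1 one_pos
  have h2 := hroot 2 two_pos
  constructor <;> nlinarith

theorem stmt11 (K : ℝ) (hK : K < 0) (α β γ δ : ℝ) (hdet : α*δ - β*γ = 1) :
    let ν : ℂ → ℂ := fun z =>
      ((Real.sqrt (-K) : ℝ) : ℂ)/2 * (z + (starRingEnd ℂ) z) / ((‖z‖ : ℝ) : ℂ)
    let f : ℂ → ℂ := fun z => ((α : ℂ)*z + (β : ℂ)) / ((γ : ℂ)*z + (δ : ℂ))
    -- the displayed formula for ν∘f
    (∀ z : ℂ, 0 < z.im →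
      ν (f z) = ((Real.sqrt (-K) : ℝ) : ℂ)/2 *
        (2*(α : ℂ)*(γ : ℂ)*((‖z‖ : ℝ) : ℂ)^2 +
          ((α : ℂ)*(δ : ℂ) + (β : ℂ)*(γ : ℂ))*(z + (starRingEnd ℂ) z) +
          2*(β : ℂ)*(δ : ℂ)) /
        (((‖(α : ℂ)*z + (β : ℂ)‖ : ℝ) : ℂ) *
          ((‖(γ : ℂ)*z + (δ : ℂ)‖ : ℝ) : ℂ))) ∧
    -- if ν∘f = ν or ν∘f = -ν on Ω, then αγ = 0 and βδ = 0
    (((∀ z : ℂ, 0 < z.im → ν (f z) = ν z) ∨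
      (∀ z : ℂ, 0 < z.im → ν (f z) = -ν z)) → α*γ = 0 ∧ β*δ = 0) :=
  stmt11_general K hK α β γ δ
end

section
/- Let G = D ∪ Dξ ⊆ PSL₂(ℝ) where D is the diagonal subgroup modulo ±I and ξ = [[0,1],[−1,0]]. Define on PSL₂(ℝ) the relation f₁ ≈ f₂ iff f₂ = g₁ f₁ g₂ for some g₁, g₂ ∈ G. For s ∈ ℝ set m_s = [[s, 1−s],[−1, 1]] (note det m_s = 1). Then for s, t ∈ ℝ: m_s ≈ m_t if and only if s = t, or (s + t = 1 and s ∉ [0,1]). -/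
/-- `SL(2,ℝ)`. -/
abbrev SL2R := Matrix.SpecialLinearGroup (Fin 2) ℝ

/-- `PSL(2,ℝ) = SL(2,ℝ)/{±I}`. -/
abbrev PSL2R := SL2R ⧸ Subgroup.center SL2R

/-- The projection `SL(2,ℝ) → PSL(2,ℝ)`. -/
def projPSL : SL2R →* PSL2R := QuotientGroup.mk' (Subgroup.center SL2R)

/-- The image `D` of the diagonal subgroup in `PSL(2,ℝ)`. -/
def Dset : Set PSL2R :=
  {g | ∃ (α : ℝ) (hα : α ≠ 0),
    g = projPSL ⟨!![α, 0; 0, α⁻¹], by rw [Matrix.det_fin_two_of]; field_simp <;> norm_num⟩}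

/-- The class `ξ` of `[[0,1],[-1,0]]` in `PSL(2,ℝ)`. -/
def xiP : PSL2R := projPSL ⟨!![0, 1; -1, 0], by rw [Matrix.det_fin_two_of]; norm_num⟩

/-- The subgroup `G = D ∪ Dξ` of `PSL(2,ℝ)`, as a set. -/
def Gset : Set PSL2R := Dset ∪ (fun g => g * xiP) '' Dset

/-- The class of the matrix `m_s = [[s, 1-s],[-1, 1]]` (of determinant 1). -/
def mP (s : ℝ) : PSL2R :=
  projPSL ⟨!![s, 1 - s; -1, 1], by rw [Matrix.det_fin_two_of]; ring⟩

/-!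
Lift everything to `SL(2,ℝ)`: `G` is the image of the monomial (diagonal or antidiagonal)
matrices, and the sign ambiguity of a lift can be absorbed into the left factor, so
`m_s ≈ m_t` means `m_t = A m_s B` with `A`, `B` monomial of determinant `1`.

For such `A`, `B` the product `a d` of the diagonal entries of `A M B` equals that of `M` when
`A`, `B` are of the same shape, and equals `1 - a d` (as `det M = 1`) when `A` is antidiagonal
and `B` diagonal; since `a d = s` for `m_s`, this gives `s = t` or `s + t = 1`. In the mixed
cases the product of the bottom-row entries of `A M B` is a square times `±` a product of two
entries of `M`; comparing its sign with that of the bottom row `(-1, 1)` of `m_t` excludes a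
diagonal `A` with an antidiagonal `B`, and forces `s (1 - s) < 0` in the other case.
Conversely, with `D_α = diag(α, α⁻¹)`, `m_{1-s} = (D_{s x} ξ) m_s D_x` once `x² = (s - 1) / s`,
which is solvable exactly when `s ∉ [0, 1]`.
-/

namespace Matrix

variable {R : Type*} [CommRing R] {A M B : Matrix (Fin 2) (Fin 2) R}

def IsAntidiag (A : Matrix (Fin 2) (Fin 2) R) : Prop := A 0 0 = 0 ∧ A 1 1 = 0

def IsMonomial (A : Matrix (Fin 2) (Fin 2) R) : Prop := A.IsDiag ∨ A.IsAntidiag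

lemma isDiag_fin_two_iff : A.IsDiag ↔ A 0 1 = 0 ∧ A 1 0 = 0 := by
  refine ⟨fun h => ⟨h (by decide), h (by decide)⟩, fun ⟨h01, h10⟩ i j hij => ?_⟩
  fin_cases i <;> fin_cases j <;> simp_all

lemma IsMonomial.neg (hA : A.IsMonomial) : (-A).IsMonomial := by
  rcases hA with hA | ⟨h00, h11⟩
  · exact Or.inl hA.neg
  · exact Or.inr ⟨by simp [h00], by simp [h11]⟩

lemma diag_prod_diag_mul_mul_diag (hA : A.IsDiag) (hB : B.IsDiag) :
    (A * M * B) 0 0 * (A * M * B) 1 1 = A.det * B.det * (M 0 0 * M 1 1) := by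
  rw [isDiag_fin_two_iff] at hA hB
  simp only [mul_apply, Fin.sum_univ_two, det_fin_two, hA, hB, zero_mul, mul_zero, add_zero,
    zero_add]
  ring

lemma diag_prod_antidiag_mul_mul_antidiag (hA : A.IsAntidiag) (hB : B.IsAntidiag) :
    (A * M * B) 0 0 * (A * M * B) 1 1 = A.det * B.det * (M 0 0 * M 1 1) := by
  simp only [mul_apply, Fin.sum_univ_two, det_fin_two, hA.1, hA.2, hB.1, hB.2, zero_mul, mul_zero,
    add_zero, zero_add]
  ring

lemma diag_prod_antidiag_mul_mul_diag (hA : A.IsAntidiag) (hB : B.IsDiag) :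
    (A * M * B) 0 0 * (A * M * B) 1 1 = -(A.det * B.det) * (M 0 1 * M 1 0) := by
  rw [isDiag_fin_two_iff] at hB
  simp only [mul_apply, Fin.sum_univ_two, det_fin_two, hA.1, hA.2, hB, zero_mul, mul_zero, add_zero,
    zero_add]
  ring

lemma row_one_prod_mul_mul_diag (hA : A 1 1 = 0) (hB : B.IsDiag) :
    (A * M * B) 1 0 * (A * M * B) 1 1 = A 1 0 ^ 2 * B.det * (M 0 0 * M 0 1) := by
  rw [isDiag_fin_two_iff] at hB
  simp only [mul_apply, Fin.sum_univ_two, det_fin_two, hA, hB, zero_mul, mul_zero, add_zero,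
    zero_add]
  ring

lemma row_one_prod_mul_mul_antidiag (hA : A 1 0 = 0) (hB : B.IsAntidiag) :
    (A * M * B) 1 0 * (A * M * B) 1 1 = -(A 1 1 ^ 2 * B.det) * (M 1 0 * M 1 1) := by
  simp only [mul_apply, Fin.sum_univ_two, det_fin_two, hA, hB.1, hB.2, zero_mul, mul_zero, add_zero,
    zero_add]
  ring

end Matrix

open Matrix

lemma projPSL_eq_projPSL_iff {A B : SL2R} : projPSL A = projPSL B ↔ B = A ∨ B = -A := by
  rw [projPSL, QuotientGroup.mk'_eq_mk']
  constructor
  · rintro ⟨z, hz, rfl⟩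
    obtain ⟨r, hr, hrz⟩ := Matrix.SpecialLinearGroup.mem_center_iff.mp hz
    rw [Fintype.card_fin, sq_eq_one_iff] at hr
    rcases hr with rfl | rfl
    · exact Or.inl (by rw [show z = 1 from Subtype.ext (by simp [← hrz]), mul_one])
    · have hz : z = -1 := Subtype.ext <| by
        rw [← hrz, Matrix.SpecialLinearGroup.coe_neg, Matrix.SpecialLinearGroup.coe_one, map_neg,
          map_one]
      exact Or.inr (by rw [hz, mul_neg_one])
  · have neg_one_mem : (-1 : SL2R) ∈ Subgroup.center SL2R :=
      Subgroup.mem_center_iff.mpr fun g => by simp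
    rintro (rfl | rfl)
    · exact ⟨1, Subgroup.one_mem _, mul_one _⟩
    · exact ⟨-1, neg_one_mem, mul_neg_one _⟩

noncomputable def diagSL (α : ℝ) (hα : α ≠ 0) : SL2R :=
  ⟨!![α, 0; 0, α⁻¹], by simp [det_fin_two_of, hα]⟩

def xiSL : SL2R := ⟨!![0, 1; -1, 0], by rw [det_fin_two_of]; norm_num⟩

lemma isDiag_diagSL (α : ℝ) (hα : α ≠ 0) : (diagSL α hα : Matrix (Fin 2) (Fin 2) ℝ).IsDiag :=
  isDiag_fin_two_iff.mpr ⟨rfl, rfl⟩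

lemma isAntidiag_diagSL_mul_xiSL (α : ℝ) (hα : α ≠ 0) :
    ((diagSL α hα * xiSL : SL2R) : Matrix (Fin 2) (Fin 2) ℝ).IsAntidiag := by
  rw [Matrix.SpecialLinearGroup.coe_mul]
  simp [IsAntidiag, diagSL, xiSL]

lemma exists_eq_diagSL_of_isDiag {A : SL2R} (hA : (A : Matrix (Fin 2) (Fin 2) ℝ).IsDiag) :
    ∃ α hα, A = diagSL α hα := by
  obtain ⟨h01, h10⟩ := isDiag_fin_two_iff.mp hA
  have hdet : A 0 0 * A 1 1 = 1 := by
    have := Matrix.SpecialLinearGroup.det_coe A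
    rwa [det_fin_two, h01, h10, mul_zero, sub_zero] at this
  refine ⟨A 0 0, left_ne_zero_of_mul_eq_one hdet, ?_⟩
  ext i j
  fin_cases i <;> fin_cases j <;> simp [diagSL, h01, h10, eq_inv_of_mul_eq_one_right hdet]

lemma exists_eq_diagSL_mul_xiSL_of_isAntidiag {A : SL2R}
    (hA : (A : Matrix (Fin 2) (Fin 2) ℝ).IsAntidiag) : ∃ α hα, A = diagSL α hα * xiSL := by
  have hdet : A 0 1 * -A 1 0 = 1 := by
    have := Matrix.SpecialLinearGroup.det_coe A
    rw [det_fin_two, hA.1, hA.2] at this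
    linear_combination this
  refine ⟨A 0 1, left_ne_zero_of_mul_eq_one hdet, ?_⟩
  ext i j
  rw [Matrix.SpecialLinearGroup.coe_mul]
  fin_cases i <;> fin_cases j <;>
    simp [diagSL, xiSL, hA.1, hA.2, ← eq_inv_of_mul_eq_one_right hdet]

lemma mem_Gset_iff {g : PSL2R} :
    g ∈ Gset ↔ ∃ A : SL2R, (A : Matrix (Fin 2) (Fin 2) ℝ).IsMonomial ∧ projPSL A = g := by
  constructor
  · rintro (⟨α, hα, rfl⟩ | ⟨_, ⟨α, hα, rfl⟩, rfl⟩)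
    · exact ⟨diagSL α hα, Or.inl (isDiag_diagSL α hα), rfl⟩
    · exact ⟨diagSL α hα * xiSL, Or.inr (isAntidiag_diagSL_mul_xiSL α hα), map_mul _ _ _⟩
  · rintro ⟨A, hA | hA, rfl⟩
    · obtain ⟨α, hα, rfl⟩ := exists_eq_diagSL_of_isDiag hA
      exact Or.inl ⟨α, hα, rfl⟩
    · obtain ⟨α, hα, rfl⟩ := exists_eq_diagSL_mul_xiSL_of_isAntidiag hA
      exact Or.inr ⟨_, ⟨α, hα, rfl⟩, (map_mul _ _ _).symm⟩

lemma exists_Gset_mul_mul_eq_iff (X Y : SL2R) :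
    (∃ g₁ ∈ Gset, ∃ g₂ ∈ Gset, projPSL Y = g₁ * projPSL X * g₂) ↔
      ∃ A B : SL2R, (A : Matrix (Fin 2) (Fin 2) ℝ).IsMonomial ∧
        (B : Matrix (Fin 2) (Fin 2) ℝ).IsMonomial ∧ Y = A * X * B := by
  constructor
  · rintro ⟨_, hg₁, _, hg₂, h⟩
    obtain ⟨A, hA, rfl⟩ := mem_Gset_iff.mp hg₁
    obtain ⟨B, hB, rfl⟩ := mem_Gset_iff.mp hg₂
    rw [← map_mul, ← map_mul, eq_comm, projPSL_eq_projPSL_iff] at h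
    rcases h with h | h
    · exact ⟨A, B, hA, hB, h⟩
    · refine ⟨-A, B, ?_, hB, by rw [h, neg_mul, neg_mul]⟩
      rw [Matrix.SpecialLinearGroup.coe_neg]
      exact hA.neg
  · rintro ⟨A, B, hA, hB, rfl⟩
    exact ⟨_, mem_Gset_iff.mpr ⟨A, hA, rfl⟩, _, mem_Gset_iff.mpr ⟨B, hB, rfl⟩, by
      simp only [map_mul]⟩

noncomputable def mSL (s : ℝ) : SL2R := ⟨!![s, 1 - s; -1, 1], by rw [det_fin_two_of]; ring⟩

lemma eq_or_of_mSL_eq_mul_mul {s t : ℝ} {A B : SL2R}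
    (hA : (A : Matrix (Fin 2) (Fin 2) ℝ).IsMonomial)
    (hB : (B : Matrix (Fin 2) (Fin 2) ℝ).IsMonomial) (h : mSL t = A * mSL s * B) :
    s = t ∨ (s + t = 1 ∧ s ∉ Set.Icc (0 : ℝ) 1) := by
  have hM : !![t, 1 - t; -1, 1] = (A : Matrix (Fin 2) (Fin 2) ℝ) * !![s, 1 - s; -1, 1] * B := by
    have := congrArg (fun X : SL2R => (X : Matrix (Fin 2) (Fin 2) ℝ)) h
    simp only [Matrix.SpecialLinearGroup.coe_mul] at this
    exact this
  have hdA := Matrix.SpecialLinearGroup.det_coe A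
  have hdB := Matrix.SpecialLinearGroup.det_coe B
  rcases hA with hA | hA <;> rcases hB with hB | hB
  · have hdiag := diag_prod_diag_mul_mul_diag hA hB (M := !![s, 1 - s; -1, 1])
    rw [← hM, hdA, hdB] at hdiag
    left
    simpa using hdiag.symm
  · have hrow := row_one_prod_mul_mul_antidiag (isDiag_fin_two_iff.mp hA).2 hB
      (M := !![s, 1 - s; -1, 1])
    rw [← hM, hdB] at hrow
    have hsq : -1 = A 1 1 ^ 2 := by simpa using hrow
    linarith [sq_nonneg (A 1 1)]
  · have hdiag := diag_prod_antidiag_mul_mul_diag hA hB (M := !![s, 1 - s; -1, 1])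
    have hrow := row_one_prod_mul_mul_diag hA.2 hB (M := !![s, 1 - s; -1, 1])
    rw [← hM, hdA, hdB] at hdiag
    rw [← hM, hdB] at hrow
    have ht : t = 1 - s := by simpa using hdiag
    have hsq : -1 = A 1 0 ^ 2 * (s * (1 - s)) := by simpa using hrow
    refine Or.inr ⟨by linarith, fun ⟨hs0, hs1⟩ => ?_⟩
    linarith [mul_nonneg (sq_nonneg (A 1 0)) (mul_nonneg hs0 (sub_nonneg.2 hs1))]
  · have hdiag := diag_prod_antidiag_mul_mul_antidiag hA hB (M := !![s, 1 - s; -1, 1])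
    rw [← hM, hdA, hdB] at hdiag
    left
    simpa using hdiag.symm

lemma exists_mSL_eq_mul_mul {s t : ℝ} (hst : s + t = 1) (hs : s ∉ Set.Icc (0 : ℝ) 1) :
    ∃ A B : SL2R, (A : Matrix (Fin 2) (Fin 2) ℝ).IsMonomial ∧
      (B : Matrix (Fin 2) (Fin 2) ℝ).IsMonomial ∧ mSL t = A * mSL s * B := by
  rw [Set.mem_Icc, not_and_or, not_le, not_le] at hs
  have hs0 : s ≠ 0 := by rintro rfl; rcases hs with hs | hs <;> linarith
  obtain ⟨x, hx0, hx⟩ : ∃ x : ℝ, x ≠ 0 ∧ s * x ^ 2 = s - 1 := by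
    have hpos : 0 < (s - 1) / s := by
      rcases hs with hs | hs
      · exact div_pos_of_neg_of_neg (by linarith) hs
      · exact div_pos (by linarith) (by linarith)
    refine ⟨√((s - 1) / s), (Real.sqrt_pos.mpr hpos).ne', ?_⟩
    rw [Real.sq_sqrt hpos.le]
    field_simp
  refine ⟨diagSL (s * x) (mul_ne_zero hs0 hx0) * xiSL, diagSL x hx0,
    Or.inr (isAntidiag_diagSL_mul_xiSL _ _), Or.inl (isDiag_diagSL _ _), ?_⟩
  ext i j
  simp only [Matrix.SpecialLinearGroup.coe_mul]
  fin_cases i <;> fin_cases j <;> simp [mSL, diagSL, xiSL] <;> field_simp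
  · linear_combination hst + hx
  · linear_combination -hst
  · linear_combination hx

theorem stmt14 (s t : ℝ) :
    (∃ g₁ ∈ Gset, ∃ g₂ ∈ Gset, mP t = g₁ * mP s * g₂) ↔
      s = t ∨ (s + t = 1 ∧ s ∉ Set.Icc (0:ℝ) 1) := by
  change (∃ g₁ ∈ Gset, ∃ g₂ ∈ Gset, projPSL (mSL t) = g₁ * projPSL (mSL s) * g₂) ↔ _
  rw [exists_Gset_mul_mul_eq_iff]
  constructor
  · rintro ⟨A, B, hA, hB, h⟩
    exact eq_or_of_mSL_eq_mul_mul hA hB h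
  · rintro (rfl | ⟨hst, hs⟩)
    · exact ⟨1, 1, Or.inl isDiag_one, Or.inl isDiag_one, by rw [one_mul, mul_one]⟩
    · exact exists_mSL_eq_mul_mul hst hs
end
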